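/- Let (G, τ, ⊕) be a P-gyrogroup (a topological gyrogroup whose underlying space is a P-space, i.e., every G_δ-set is open). Then G has a base at the identity 0 consisting of open (and hence closed) subgyrogroups. -/
import Mathlib


universe u

/-- A gyrogroup: a set with a binary operation `+`, a (unique) two-sided identity `0`,
(unique) two-sided inverses `-x`, and gyroautomorphisms `gyr x y` satisfying the
left gyroassociative law and the left loop property. -/
class Gyrogroup (G : Type u) extends Add G, Zero G, Neg G where
  gyr : G → G → G → G
  zero_add : ∀ a : G, 0 + a = a
  add_zero : ∀ a : G, a + 0 = a
  zero_unique : ∀ e : G, (∀ a : G, e + a = a ∧ a + e = a) → e = 0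
  neg_add : ∀ a : G, -a + a = 0
  add_neg : ∀ a : G, a + -a = 0
  neg_unique : ∀ a b : G, (b + a = 0 ∧ a + b = 0) → b = -a
  gyr_bijective : ∀ x y : G, Function.Bijective (gyr x y)
  gyr_add : ∀ x y a b : G, gyr x y (a + b) = gyr x y a + gyr x y b
  add_gyroassoc : ∀ x y z : G, x + (y + z) = x + y + gyr x y z
  gyr_left_loop : ∀ x y : G, gyr (x + y) y = gyr x y

open Gyrogroup

/-- A topological gyrogroup: a gyrogroup with a topology making `+` jointly
continuous and negation continuous. -/
class TopologicalGyrogroup (G : Type u) [TopologicalSpace G] [Gyrogroup G] : Prop where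
  continuous_add : Continuous fun p : G × G => p.1 + p.2
  continuous_neg : Continuous fun x : G => -x

/-- `gadd A B = {a + b : a ∈ A, b ∈ B}`. -/
def gadd {G : Type u} [Gyrogroup G] (A B : Set G) : Set G := Set.image2 (· + ·) A B

/-- `gneg A = {-a : a ∈ A}`. -/
def gneg {G : Type u} [Gyrogroup G] (A : Set G) : Set G := (fun x : G => -x) '' A

/-- A subgyrogroup: a nonempty subset closed under `+` and negation. -/
def IsSubgyrogroup {G : Type u} [Gyrogroup G] (H : Set G) : Prop :=
  H.Nonempty ∧ (∀ x ∈ H, -x ∈ H) ∧ ∀ x ∈ H, ∀ y ∈ H, x + y ∈ H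

/-- An L-subgyrogroup: a subgyrogroup with `gyr a h '' H = H` for all `a ∈ G`, `h ∈ H`. -/
def IsLSubgyrogroup {G : Type u} [Gyrogroup G] (H : Set G) : Prop :=
  IsSubgyrogroup H ∧ ∀ a : G, ∀ h ∈ H, gyr a h '' H = H

section Aux

variable {G : Type u} [Gyrogroup G]

lemma g_left_cancel (a : G) {u v : G} (h : a + u = a + v) : u = v := by
  have h1 := Gyrogroup.add_gyroassoc (-a) a u
  have h2 := Gyrogroup.add_gyroassoc (-a) a v
  rw [Gyrogroup.neg_add, Gyrogroup.zero_add] at h1 h2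
  have h3 : gyr (-a) a u = gyr (-a) a v := by rw [← h1, ← h2, h]
  exact (Gyrogroup.gyr_bijective (-a) a).1 h3

lemma g_gyr_zero_left (y z : G) : gyr (0 : G) y z = z := by
  have h := Gyrogroup.add_gyroassoc (0 : G) y z
  rw [Gyrogroup.zero_add, Gyrogroup.zero_add] at h
  exact (g_left_cancel y h).symm

lemma g_gyr_neg_self (a z : G) : gyr (-a) a z = z := by
  have h := Gyrogroup.gyr_left_loop (-a) a
  rw [Gyrogroup.neg_add] at h
  rw [← congrFun h z, g_gyr_zero_left]

lemma g_gyr_self_neg (a z : G) : gyr a (-a) z = z := by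
  have h := Gyrogroup.gyr_left_loop a (-a)
  rw [Gyrogroup.add_neg] at h
  rw [← congrFun h z, g_gyr_zero_left]

lemma g_neg_add_cancel_left (a b : G) : -a + (a + b) = b := by
  rw [Gyrogroup.add_gyroassoc (-a) a b, Gyrogroup.neg_add, Gyrogroup.zero_add,
    g_gyr_neg_self]

lemma g_add_neg_cancel_left (a b : G) : a + (-a + b) = b := by
  rw [Gyrogroup.add_gyroassoc a (-a) b, Gyrogroup.add_neg, Gyrogroup.zero_add,
    g_gyr_self_neg]

lemma g_neg_zero : -(0 : G) = 0 :=
  (Gyrogroup.neg_unique (0 : G) 0 ⟨Gyrogroup.zero_add 0, Gyrogroup.zero_add 0⟩).symm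

lemma g_neg_neg (a : G) : -(-a) = a :=
  (Gyrogroup.neg_unique (-a) a ⟨Gyrogroup.add_neg a, Gyrogroup.neg_add a⟩).symm

lemma g_gyr_formula (a b c : G) : gyr a b c = -(a + b) + (a + (b + c)) := by
  rw [Gyrogroup.add_gyroassoc a b c, g_neg_add_cancel_left]

lemma g_solve_right {x w z : G} (h : x + w = z) : x = z + gyr z w (-w) := by
  have hg : gyr z w = gyr x w := by rw [← h]; exact Gyrogroup.gyr_left_loop x w
  have h1 : x = (x + w) + gyr x w (-w) := by
    conv_lhs => rw [← Gyrogroup.add_zero x, ← Gyrogroup.add_neg w]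
    exact Gyrogroup.add_gyroassoc x w (-w)
  rw [hg, ← h]; exact h1

lemma g_gyr_mem {H : Set G} (hS : IsSubgyrogroup H) {a b c : G}
    (ha : a ∈ H) (hb : b ∈ H) (hc : c ∈ H) : gyr a b c ∈ H := by
  obtain ⟨-, hneg, hadd⟩ := hS
  rw [g_gyr_formula]
  exact hadd _ (hneg _ (hadd _ ha _ hb)) _ (hadd _ ha _ (hadd _ hb _ hc))

variable [TopologicalSpace G] [TopologicalGyrogroup G]

lemma g_continuous_addL (a : G) : Continuous (fun y : G => a + y) :=
  TopologicalGyrogroup.continuous_add.comp (continuous_const.prodMk continuous_id)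

lemma g_isOpen_addL (a : G) {S : Set G} (hS : IsOpen S) :
    IsOpen ((fun y : G => a + y) '' S) := by
  have heq : (fun y : G => a + y) '' S = (fun y : G => -a + y) ⁻¹' S := by
    ext y
    constructor
    · rintro ⟨x, hx, rfl⟩
      simpa [Set.mem_preimage, g_neg_add_cancel_left] using hx
    · intro hy
      exact ⟨-a + y, hy, g_add_neg_cancel_left a y⟩
  rw [heq]
  exact hS.preimage (g_continuous_addL (-a))

lemma g_exists_sym (U : Set G) (hU : U ∈ nhds (0 : G)) :
    ∃ V : Set G, IsOpen V ∧ (0 : G) ∈ V ∧ (∀ x ∈ V, -x ∈ V) ∧ gadd V V ⊆ U := by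
  have hc : Filter.Tendsto (fun p : G × G => p.1 + p.2)
      (nhds ((0 : G), (0 : G))) (nhds (0 : G)) := by
    have h0 := (TopologicalGyrogroup.continuous_add (G := G)).tendsto ((0 : G), (0 : G))
    simpa [Gyrogroup.zero_add] using h0
  have h1 : (fun p : G × G => p.1 + p.2) ⁻¹' U ∈ nhds ((0 : G), (0 : G)) := hc hU
  rw [nhds_prod_eq, Filter.mem_prod_iff] at h1
  obtain ⟨A, hA, B, hB, hAB⟩ := h1
  obtain ⟨O, hOsub, hOopen, hO0⟩ := mem_nhds_iff.mp (Filter.inter_mem hA hB)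
  refine ⟨O ∩ (fun x : G => -x) ⁻¹' O, hOopen.inter
    (hOopen.preimage TopologicalGyrogroup.continuous_neg), ⟨hO0, by
      simpa [Set.mem_preimage, g_neg_zero] using hO0⟩, ?_, ?_⟩
  · rintro x ⟨hx1, hx2⟩
    exact ⟨hx2, by simpa [Set.mem_preimage, g_neg_neg] using hx1⟩
  · rintro z ⟨x, hx, y, hy, rfl⟩
    exact hAB (show (x, y) ∈ A ×ˢ B from ⟨(hOsub hx.1).1, (hOsub hy.1).2⟩)

lemma g_closed_of_open {H : Set G} (hH : IsOpen H) (hS : IsSubgyrogroup H)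
    (h0 : (0 : G) ∈ H) : IsClosed H := by
  rw [← isOpen_compl_iff, isOpen_iff_mem_nhds]
  intro x hx
  have hmem : (fun y : G => x + y) '' H ∈ nhds x :=
    (g_isOpen_addL x hH).mem_nhds ⟨0, h0, Gyrogroup.add_zero x⟩
  apply Filter.mem_of_superset hmem
  rintro z ⟨w, hw, rfl⟩ hz
  apply hx
  have hx' : x = (x + w) + gyr (x + w) w (-w) := g_solve_right rfl
  rw [hx']
  exact hS.2.2 _ hz _ (g_gyr_mem hS hz hw (hS.2.1 _ hw))

end Aux

theorem stmt18 {G : Type u} [TopologicalSpace G] [Gyrogroup G] [TopologicalGyrogroup G]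
    [T1Space G]
    (hP : ∀ f : ℕ → Set G, (∀ n, IsOpen (f n)) → IsOpen (⋂ n, f n)) :
    ∀ U ∈ nhds (0 : G), ∃ V : Set G,
      IsOpen V ∧ IsClosed V ∧ IsSubgyrogroup V ∧ (0 : G) ∈ V ∧ V ⊆ U := by
  intro U hU
  -- property of "good" neighborhoods
  set P : Set G → Prop := fun V => IsOpen V ∧ (0 : G) ∈ V ∧ ∀ x ∈ V, -x ∈ V with hPdef
  obtain ⟨V0, hV0o, hV00, hV0s, hV0add⟩ := g_exists_sym U hU
  have key : ∀ V : {V : Set G // P V}, ∃ W : Set G, P W ∧ gadd W W ⊆ V.1 := by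
    rintro ⟨V, hVo, hV0, hVs⟩
    obtain ⟨W, h1, h2, h3, h4⟩ := g_exists_sym V (hVo.mem_nhds hV0)
    exact ⟨W, ⟨h1, h2, h3⟩, h4⟩
  choose F hF using key
  -- recursive sequence of good neighborhoods
  let seq : ℕ → {V : Set G // P V} := fun n =>
    Nat.rec ⟨V0, hV0o, hV00, hV0s⟩ (fun _ prev => ⟨F prev, (hF prev).1⟩) n
  have hstep : ∀ n, gadd (seq (n + 1)).1 (seq (n + 1)).1 ⊆ (seq n).1 :=
    fun n => (hF (seq n)).2
  set W : Set G := ⋂ n, (seq n).1 with hWdef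
  have hWopen : IsOpen W := hP _ (fun n => (seq n).2.1)
  have hW0 : (0 : G) ∈ W := Set.mem_iInter.2 fun n => (seq n).2.2.1
  have hWneg : ∀ x ∈ W, -x ∈ W := by
    intro x hx
    exact Set.mem_iInter.2 fun n => (seq n).2.2.2 x (Set.mem_iInter.1 hx n)
  have hWadd : ∀ x ∈ W, ∀ y ∈ W, x + y ∈ W := by
    intro x hx y hy
    refine Set.mem_iInter.2 fun n => ?_
    exact hstep n ⟨x, Set.mem_iInter.1 hx (n + 1), y, Set.mem_iInter.1 hy (n + 1), rfl⟩
  have hWsub : W ⊆ U := by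
    intro x hx
    have hx0 : x ∈ (seq 0).1 := Set.mem_iInter.1 hx 0
    have : x + 0 ∈ U := hV0add ⟨x, hx0, 0, hV00, rfl⟩
    rwa [Gyrogroup.add_zero] at this
  have hWsg : IsSubgyrogroup W := ⟨⟨0, hW0⟩, hWneg, hWadd⟩
  exact ⟨W, hWopen, g_closed_of_open hWopen hWsg hW0, hWsg, hW0, hWsub⟩
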